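/- arXiv:2512.00930 — 4 statements merged into one kernel-verified Lean document; each statement's English description precedes it below -/
import Mathlib

section
/- Let Ω be a nonempty convex subset of ℝ^L such that no vector in Ω has all entries strictly negative. Then there exists a vector w in the unit simplex of ℝ^L (w ≥ 0 coordinatewise, Σ_ℓ w_ℓ = 1) such that wᵀμ ≥ 0 for all μ ∈ Ω. -/
/-!
Separate `Ω` by Hahn–Banach from the open negative orthant `N`, which it does not meet:
`f < c` on `N` and `c ≤ f` on `Ω`. Since `N` is a cone, `f ≤ 0` on `N` and `0 ≤ c`; by continuity
`f ≤ 0` on the closed nonpositive orthant, so the coefficients `f (Pi.single i 1)` of `f` are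
nonnegative. They are not all zero, and normalizing them to sum `1` gives `w`.
-/

open Set

section LinearOrderedField

variable {𝕜 : Type*} [Field 𝕜] [LinearOrder 𝕜] [IsStrictOrderedRing 𝕜] {b c : 𝕜}

lemma nonpos_of_forall_pos_mul_lt (h : ∀ t : 𝕜, 0 < t → t * b < c) : b ≤ 0 := by
  by_contra! hb
  have := h ((|c| + 1) / b) (by positivity)
  rw [div_mul_cancel₀ _ hb.ne'] at this
  linarith [le_abs_self c]

lemma nonneg_of_forall_pos_mul_lt (h : ∀ t : 𝕜, 0 < t → t * b < c) : 0 ≤ c := by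
  have hb := nonpos_of_forall_pos_mul_lt h
  by_contra! hc
  have hb1 : b - 1 < 0 := by linarith
  have := h (c / (b - 1)) (div_pos_of_neg_of_neg hc hb1)
  rw [div_mul_eq_mul_div, div_lt_iff_of_neg hb1] at this
  nlinarith

end LinearOrderedField

variable {ι : Type*} [Fintype ι]

lemma LinearMap.apply_eq_sum_apply_single_mul {R : Type*} [CommSemiring R] [DecidableEq ι]
    (f : (ι → R) →ₗ[R] R) (x : ι → R) : f x = ∑ i, f (Pi.single i 1) * x i := by
  conv_lhs => rw [← Finset.univ_sum_single x, map_sum]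
  refine Finset.sum_congr rfl fun i _ => ?_
  rw [show Pi.single i (x i) = x i • Pi.single i 1 by rw [← Pi.single_smul', smul_eq_mul, mul_one],
    map_smul, smul_eq_mul, mul_comm]

lemma exists_ne_zero_positive_linearMap_nonneg_on (Ω : Set (ι → ℝ)) (hne : Ω.Nonempty)
    (hconv : Convex ℝ Ω) (h : ∀ μ ∈ Ω, ∃ ℓ, 0 ≤ μ ℓ) :
    ∃ f : (ι → ℝ) →ₗ[ℝ] ℝ, f ≠ 0 ∧ (∀ x, 0 ≤ x → 0 ≤ f x) ∧ ∀ μ ∈ Ω, 0 ≤ f μ := by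
  set N : Set (ι → ℝ) := univ.pi fun _ => Iio 0
  have hdisj : Disjoint N Ω := disjoint_left.2 fun μ hμN hμΩ => by
    obtain ⟨ℓ, hℓ⟩ := h μ hμΩ
    exact (hμN ℓ (mem_univ ℓ)).not_ge hℓ
  obtain ⟨f, c, hfN, hfΩ⟩ := geometric_hahn_banach_open (convex_pi fun _ _ => convex_Iio 0)
    (isOpen_set_pi finite_univ fun _ _ => isOpen_Iio) hconv hdisj
  have hcone : ∀ x ∈ N, ∀ t : ℝ, 0 < t → t * f x < c := fun x hx t ht => by
    simpa using hfN (t • x) fun i _ => by simpa using mul_neg_of_pos_of_neg ht (hx i (mem_univ i))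
  have hneg : (-1 : ι → ℝ) ∈ N := fun _ _ => by simp
  have hc : 0 ≤ c := nonneg_of_forall_pos_mul_lt (hcone _ hneg)
  have hclosure : ∀ x ∈ closure N, f x ≤ 0 :=
    closure_minimal (fun x hx => nonpos_of_forall_pos_mul_lt (hcone x hx))
      (isClosed_le f.continuous continuous_const)
  refine ⟨f, ?_, fun x hx => ?_, fun μ hμ => hc.trans (hfΩ μ hμ)⟩
  · intro hf_zero
    obtain ⟨μ, hμ⟩ := hne
    have hlt := hfN _ hneg
    have hle := hfΩ μ hμ
    rw [← f.coe_coe, hf_zero, LinearMap.zero_apply] at hlt hle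
    linarith
  · have : -x ∈ closure N := by
      rw [closure_pi_set]
      exact fun i _ => by simpa [closure_Iio] using hx i
    simpa using hclosure _ this

lemma LinearMap.exists_mem_stdSimplex_apply_eq_mul_sum [DecidableEq ι] (f : (ι → ℝ) →ₗ[ℝ] ℝ)
    (hf0 : f ≠ 0) (hf : ∀ x, 0 ≤ x → 0 ≤ f x) :
    ∃ w ∈ stdSimplex ℝ ι, ∃ s : ℝ, 0 < s ∧ ∀ x, f x = s * ∑ i, w i * x i := by
  set v : ι → ℝ := fun i => f (Pi.single i 1)
  have hv : ∀ i, 0 ≤ v i := fun i => hf _ (Pi.single_nonneg.2 zero_le_one)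
  have hS : 0 < ∑ i, v i := by
    refine (Finset.sum_nonneg fun i _ => hv i).lt_of_ne fun h0 => hf0 (LinearMap.ext fun x => ?_)
    have hv0 := (Finset.sum_eq_zero_iff_of_nonneg fun i _ => hv i).1 h0.symm
    simp [f.apply_eq_sum_apply_single_mul x, v, hv0]
  refine ⟨fun i => v i / ∑ j, v j, ⟨fun i => div_nonneg (hv i) hS.le, ?_⟩, _, hS, fun x => ?_⟩
  · rw [← Finset.sum_div, div_self hS.ne']
  · rw [f.apply_eq_sum_apply_single_mul x, Finset.mul_sum]
    refine Finset.sum_congr rfl fun i _ => ?_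
    rw [← mul_assoc, mul_div_cancel₀ _ hS.ne']

theorem stmt1 (L : ℕ) (Ω : Set (Fin L → ℝ)) (hne : Ω.Nonempty) (hconv : Convex ℝ Ω)
    (h : ∀ μ ∈ Ω, ∃ ℓ, 0 ≤ μ ℓ) :
    ∃ w : Fin L → ℝ, (∀ ℓ, 0 ≤ w ℓ) ∧ (∑ ℓ, w ℓ) = 1 ∧
      ∀ μ ∈ Ω, 0 ≤ ∑ ℓ, w ℓ * μ ℓ := by
  obtain ⟨f, hf0, hf, hfΩ⟩ := exists_ne_zero_positive_linearMap_nonneg_on Ω hne hconv h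
  obtain ⟨w, ⟨hw, hw1⟩, s, hs, hfw⟩ := f.exists_mem_stdSimplex_apply_eq_mul_sum hf0 hf
  exact ⟨w, hw, hw1, fun μ hμ => nonneg_of_mul_nonneg_right (hfw μ ▸ hfΩ μ hμ) hs⟩
end

section
/- Generalized Gordan's Theorem: For a nonempty convex set Ω ⊆ ℝ^L, exactly one of the following holds: (1) there exists μ ∈ Ω with all entries strictly negative; (2) there exists w in the unit simplex of ℝ^L such that wᵀμ ≥ 0 for all μ ∈ Ω. -/
/-!
If `Ω` contains no strictly negative vector, it is disjoint from the open negative orthant, and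
Hahn–Banach gives a functional `f` and a level `u` with `f < u` on the orthant and `u ≤ f` on `Ω`.
The orthant is a cone whose closure contains `0` and every `-eᵢ`, so `0 ≤ u` and every coefficient
`f eᵢ` is nonnegative; they are not all zero because `Ω` is nonempty, and normalising them gives
the weight vector. Conversely, a simplex weight pairs strictly negatively with any strictly
negative vector, so the two alternatives exclude each other.
-/

open Set

section NegOrthant

variable {ι : Type*}

def negOrthant (ι : Type*) : Set (ι → ℝ) := univ.pi fun _ => Iio 0

lemma mem_negOrthant {x : ι → ℝ} : x ∈ negOrthant ι ↔ ∀ i, x i < 0 := by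
  simp [negOrthant]

lemma smul_mem_negOrthant {x : ι → ℝ} (hx : x ∈ negOrthant ι) {t : ℝ} (ht : 0 < t) :
    t • x ∈ negOrthant ι :=
  mem_negOrthant.2 fun i => mul_neg_of_pos_of_neg ht (mem_negOrthant.1 hx i)

lemma convex_negOrthant : Convex ℝ (negOrthant ι) :=
  convex_pi fun _ _ => convex_Iio 0

lemma isOpen_negOrthant [Finite ι] : IsOpen (negOrthant ι) :=
  isOpen_set_pi finite_univ fun _ _ => isOpen_Iio

lemma closure_negOrthant : closure (negOrthant ι) = univ.pi fun _ => Iic 0 := by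
  simp only [negOrthant, closure_pi_set, closure_Iio]

end NegOrthant

lemma LinearMap.map_nonpos_of_lt_on_cone {E : Type*} [AddCommGroup E] [Module ℝ E]
    (f : E →ₗ[ℝ] ℝ) {s : Set E} (hs : ∀ x ∈ s, ∀ t : ℝ, 0 < t → t • x ∈ s) {u : ℝ}
    (hf : ∀ x ∈ s, f x < u) {x : E} (hx : x ∈ s) : f x ≤ 0 := by
  by_contra! hfx
  have ht : 0 < (|u| + 1) / f x := by positivity
  have := hf _ (hs x hx _ ht)
  rw [map_smul, smul_eq_mul, div_mul_cancel₀ _ hfx.ne'] at this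
  linarith [le_abs_self u]

lemma LinearMap.pi_apply_eq_sum_apply_single_mul {ι R : Type*} [Fintype ι] [DecidableEq ι]
    [CommSemiring R] (f : (ι → R) →ₗ[R] R) (x : ι → R) :
    f x = ∑ i, f (Pi.single i 1) * x i := by
  conv_lhs => rw [← Finset.univ_sum_single x]
  refine (map_sum f _ _).trans (Finset.sum_congr rfl fun i _ => ?_)
  rw [mul_comm, ← smul_eq_mul, ← map_smul, ← Pi.single_smul', smul_eq_mul, mul_one]

section Separation

variable {ι : Type*} (f : StrongDual ℝ (ι → ℝ)) {u : ℝ} (hf : ∀ x ∈ negOrthant ι, f x < u)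
include hf

lemma nonneg_of_lt_on_negOrthant : 0 ≤ u := by
  have hle : closure (negOrthant ι) ⊆ {x | f x ≤ u} :=
    closure_minimal (fun x hx => (hf x hx).le) (isClosed_le f.continuous continuous_const)
  have h0 : (0 : ι → ℝ) ∈ closure (negOrthant ι) := by
    rw [closure_negOrthant]
    exact fun _ _ => le_refl (0 : ℝ)
  simpa using hle h0

lemma apply_single_nonneg_of_lt_on_negOrthant [DecidableEq ι] (i : ι) :
    0 ≤ f (Pi.single i 1) := by
  have hle : closure (negOrthant ι) ⊆ {x | f x ≤ 0} :=
    closure_minimal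
      (fun _ hx => (f : (ι → ℝ) →ₗ[ℝ] ℝ).map_nonpos_of_lt_on_cone
        (fun _ hy _ ht => smul_mem_negOrthant hy ht) hf hx)
      (isClosed_le f.continuous continuous_const)
  have hi : -Pi.single i 1 ∈ closure (negOrthant ι) := by
    rw [closure_negOrthant]
    intro j _
    by_cases hj : j = i <;> simp [hj]
  simpa using hle hi

end Separation

lemma sum_mul_neg_of_nonneg_of_neg {ι : Type*} [Fintype ι] {w μ : ι → ℝ} (hw : ∀ i, 0 ≤ w i)
    (hw_pos : 0 < ∑ i, w i) (hμ : ∀ i, μ i < 0) : ∑ i, w i * μ i < 0 := by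
  obtain ⟨j, -, hj⟩ := Finset.exists_lt_of_sum_lt (f := fun _ => 0) (g := w)
    (by rwa [Finset.sum_const_zero])
  have : ∑ i, w i * μ i < ∑ _i : ι, (0 : ℝ) :=
    Finset.sum_lt_sum (fun i _ => mul_nonpos_of_nonneg_of_nonpos (hw i) (hμ i).le)
      ⟨j, Finset.mem_univ j, mul_neg_of_pos_of_neg hj (hμ j)⟩
  simpa using this

theorem exists_simplex_nonneg_of_disjoint_negOrthant {ι : Type*} [Fintype ι]
    {Ω : Set (ι → ℝ)} (hne : Ω.Nonempty) (hconv : Convex ℝ Ω) (hΩ : Disjoint (negOrthant ι) Ω) :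
    ∃ w : ι → ℝ, (∀ i, 0 ≤ w i) ∧ ∑ i, w i = 1 ∧ ∀ μ ∈ Ω, 0 ≤ ∑ i, w i * μ i := by
  classical
  obtain ⟨f, u, hfN, hfΩ⟩ := geometric_hahn_banach_open convex_negOrthant isOpen_negOrthant hconv hΩ
  set v : ι → ℝ := fun i => f (Pi.single i 1)
  have hv : ∀ i, 0 ≤ v i := apply_single_nonneg_of_lt_on_negOrthant f hfN
  have hu : 0 ≤ u := nonneg_of_lt_on_negOrthant f hfN
  have hf : ∀ x, f x = ∑ i, v i * x i := (f : (ι → ℝ) →ₗ[ℝ] ℝ).pi_apply_eq_sum_apply_single_mul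
  have hS : 0 < ∑ i, v i := by
    refine (Finset.sum_nonneg fun i _ => hv i).lt_of_ne fun hS0 => ?_
    have hv0 : ∀ i, v i = 0 := fun i =>
      (Finset.sum_eq_zero_iff_of_nonneg fun i _ => hv i).1 hS0.symm i (Finset.mem_univ i)
    obtain ⟨μ, hμ⟩ := hne
    have hneg := hfN (fun _ => -1) (mem_negOrthant.2 fun _ => neg_one_lt_zero)
    have hpos := hfΩ μ hμ
    simp only [hf, hv0, zero_mul, Finset.sum_const_zero] at hneg hpos
    linarith
  refine ⟨fun i => v i / ∑ j, v j, fun i => div_nonneg (hv i) hS.le,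
    by rw [← Finset.sum_div, div_self hS.ne'], fun μ hμ => ?_⟩
  simp only [div_mul_eq_mul_div, ← Finset.sum_div, ← hf]
  exact div_nonneg (hu.trans (hfΩ μ hμ)) hS.le

theorem stmt2 (L : ℕ) (Ω : Set (Fin L → ℝ)) (hne : Ω.Nonempty) (hconv : Convex ℝ Ω) :
    Xor' (∃ μ ∈ Ω, ∀ ℓ, μ ℓ < 0)
      (∃ w : Fin L → ℝ, (∀ ℓ, 0 ≤ w ℓ) ∧ (∑ ℓ, w ℓ) = 1 ∧
        ∀ μ ∈ Ω, 0 ≤ ∑ ℓ, w ℓ * μ ℓ) := by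
  refine xor_iff_not_iff'.2 ⟨fun hno => ?_, ?_⟩
  · exact exists_simplex_nonneg_of_disjoint_negOrthant hne hconv
      (disjoint_left.2 fun x hxN hxΩ => hno ⟨x, hxΩ, mem_negOrthant.1 hxN⟩)
  · rintro ⟨w, hw, hw1, hwΩ⟩ ⟨μ, hμΩ, hμ⟩
    exact (hwΩ μ hμΩ).not_gt (sum_mul_neg_of_nonneg_of_neg hw (hw1 ▸ one_pos) hμ)
end

section
/- Gordan's Theorem: For a matrix M ∈ ℝ^{m×L}, exactly one of the following holds: (1) there exists w ∈ ℝ^L such that every entry of Mw is strictly positive; (2) there exists β ∈ ℝ^m with β ≥ 0, β ≠ 0, and Mᵀβ = 0. -/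
/-!
The alternatives exclude each other because `β ⬝ᵥ (M *ᵥ w) = (Mᵀ *ᵥ β) ⬝ᵥ w`: the left side is
positive when `β ≥ 0`, `β ≠ 0` and `M *ᵥ w > 0`, the right side vanishes when `Mᵀ *ᵥ β = 0`.
If (2) fails, then `0` lies outside the image of the standard simplex under `Mᵀ`, which is the
convex hull of the rows of `M` and hence compact and convex. A hyperplane strictly separating `0`
from it is `{x | f x = u}` with `f x = -(x ⬝ᵥ w)`, and then every row has positive pairing with `w`.
-/

open Matrix

section

variable {R m n : Type*} [Fintype m]

lemma Matrix.dotProduct_pos_of_nonneg_of_pos [Semiring R] [PartialOrder R] [IsStrictOrderedRing R]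
    {v w : m → R} (hv : 0 ≤ v) (hv0 : v ≠ 0) (hw : ∀ i, 0 < w i) : 0 < v ⬝ᵥ w := by
  obtain ⟨i, hi⟩ := Function.ne_iff.mp hv0
  exact Finset.sum_pos' (fun j _ => mul_nonneg (hv j) (hw j).le)
    ⟨i, Finset.mem_univ i, mul_pos ((hv i).lt_of_ne' hi) (hw i)⟩

lemma Matrix.transpose_mulVec_ne_zero_of_mulVec_pos [Fintype n] [CommSemiring R] [PartialOrder R]
    [IsStrictOrderedRing R] (M : Matrix m n R) {β : m → R} (hβ : 0 ≤ β) (hβ0 : β ≠ 0)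
    {w : n → R} (hw : ∀ i, 0 < (M *ᵥ w) i) : Mᵀ *ᵥ β ≠ 0 := by
  intro hMβ
  have hpos := dotProduct_pos_of_nonneg_of_pos hβ hβ0 hw
  rw [dotProduct_mulVec, ← mulVec_transpose, hMβ, zero_dotProduct] at hpos
  exact hpos.false

lemma LinearMapClass.apply_eq_dotProduct [Fintype n] [DecidableEq n] [CommSemiring R] {F : Type*}
    [FunLike F (n → R) R] [LinearMapClass F R (n → R) R] (f : F) (v : n → R) :
    f v = v ⬝ᵥ fun j => f (Pi.single j 1) := by
  conv_lhs => rw [pi_eq_sum_univ' v]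
  simp [map_sum, dotProduct]

lemma Matrix.exists_mulVec_pos_of_transpose_mulVec_ne_zero [DecidableEq m] [Fintype n]
    [DecidableEq n] (M : Matrix m n ℝ) (h : ∀ β ∈ stdSimplex ℝ m, Mᵀ *ᵥ β ≠ 0) :
    ∃ w, ∀ i, 0 < (M *ᵥ w) i := by
  set K := Mᵀ.mulVecLin '' stdSimplex ℝ m
  have hK : IsCompact K :=
    (isCompact_stdSimplex ℝ m).image Mᵀ.mulVecLin.continuous_of_finiteDimensional
  have h0 : (0 : n → ℝ) ∉ K := fun ⟨β, hβ, hMβ⟩ => h β hβ hMβ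
  obtain ⟨f, u, hfK, hu⟩ :=
    geometric_hahn_banach_closed_point ((convex_stdSimplex ℝ m).linear_image _) hK.isClosed h0
  refine ⟨-fun j => f (Pi.single j 1), fun i => ?_⟩
  have hrow : f (M.row i) < 0 := by
    simpa using (hfK _ ⟨_, single_mem_stdSimplex ℝ i, rfl⟩).trans (hu.trans_eq (map_zero f))
  rw [LinearMapClass.apply_eq_dotProduct f] at hrow
  rw [mulVec_neg, Pi.neg_apply, neg_pos]
  exact hrow

end

theorem stmt3 (m L : ℕ) (M : Matrix (Fin m) (Fin L) ℝ) :
    Xor' (∃ w : Fin L → ℝ, ∀ i, 0 < M.mulVec w i)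
      (∃ β : Fin m → ℝ, (∀ i, 0 ≤ β i) ∧ β ≠ 0 ∧ M.transpose.mulVec β = 0) := by
  refine xor_iff_iff_not.mpr ⟨?_, fun h => ?_⟩
  · rintro ⟨w, hw⟩ ⟨β, hβ, hβ0, hMβ⟩
    exact M.transpose_mulVec_ne_zero_of_mulVec_pos hβ hβ0 hw hMβ
  · refine M.exists_mulVec_pos_of_transpose_mulVec_ne_zero fun β hβ hMβ => h ⟨β, hβ.1, ?_, hMβ⟩
    rintro rfl
    simpa using hβ.2
end

section
/- For each finite index set I and vectors μ_i ∈ Ω (a convex subset of ℝ^L not containing 0), the set V = {w ∈ ℝ^L : ‖w‖₁ = 1 and wᵀμ_i ≥ 0 for all i ∈ I} is a nonempty compact set; consequently, by the finite intersection property, ⋂_{μ ∈ Ω} {w : ‖w‖₁ = 1, wᵀμ ≥ 0} is nonempty. -/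
/-!
If finitely many points of a convex set `Ω ∌ 0` are given, `0` is not in their convex hull, so
a separating hyperplane (Gordan's theorem) yields `w` with `0 < wᵀμ` at each of them; scaling `w`
to ℓ¹-norm one gives a point of `V`. Each `V` is closed and bounded, so the finite intersection
property of the compact ℓ¹-sphere gives a common point for all `μ ∈ Ω`.
-/

open Finset Matrix

section

variable {ι : Type*} [Fintype ι]

/-- The set `V` of the paper; `dualSphere ∅` is the ℓ¹ unit sphere. -/
def dualSphere (s : Set (ι → ℝ)) : Set (ι → ℝ) :=
  {w | ∑ i, |w i| = 1 ∧ ∀ μ ∈ s, 0 ≤ w ⬝ᵥ μ}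

lemma isClosed_setOf_dotProduct_nonneg (μ : ι → ℝ) : IsClosed {w : ι → ℝ | 0 ≤ w ⬝ᵥ μ} :=
  isClosed_le continuous_const (by fun_prop)

lemma dualSphere_eq_inter (s : Set (ι → ℝ)) :
    dualSphere s = dualSphere ∅ ∩ ⋂ μ : s, {w | 0 ≤ w ⬝ᵥ (μ : ι → ℝ)} := by
  ext w
  simp [dualSphere]

lemma isCompact_dualSphere (s : Set (ι → ℝ)) : IsCompact (dualSphere s) := by
  have hclosed : IsClosed (dualSphere s) := by
    rw [dualSphere_eq_inter]
    refine IsClosed.inter ?_ (isClosed_iInter fun _ => isClosed_setOf_dotProduct_nonneg _)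
    simpa [dualSphere] using isClosed_eq (by fun_prop) continuous_const
  refine Metric.isCompact_of_isClosed_isBounded hclosed
    (isBounded_iff_forall_norm_le.2 ⟨1, fun w hw => ?_⟩)
  refine (pi_norm_le_iff_of_nonneg zero_le_one).2 fun i => ?_
  calc ‖w i‖ = |w i| := Real.norm_eq_abs _
    _ ≤ ∑ j, |w j| := single_le_sum (f := fun j => |w j|) (fun j _ => abs_nonneg _) (mem_univ i)
    _ = 1 := hw.1

lemma inv_l1Norm_smul_mem_dualSphere {s : Set (ι → ℝ)} {w : ι → ℝ} (hw : w ≠ 0)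
    (hs : ∀ μ ∈ s, 0 ≤ w ⬝ᵥ μ) : (∑ i, |w i|)⁻¹ • w ∈ dualSphere s := by
  obtain ⟨i, hi⟩ := Function.ne_iff.mp hw
  have hpos : 0 < ∑ j, |w j| :=
    sum_pos' (fun j _ => abs_nonneg (w j)) ⟨i, mem_univ i, abs_pos.2 hi⟩
  refine ⟨?_, fun μ hμ => ?_⟩
  · simp only [Pi.smul_apply, smul_eq_mul, abs_mul, abs_inv, abs_of_pos hpos, ← mul_sum]
    exact inv_mul_cancel₀ hpos.ne'
  · rw [smul_dotProduct, smul_eq_mul]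
    exact mul_nonneg (inv_nonneg.2 hpos.le) (hs μ hμ)

lemma exists_forall_dotProduct_pos {C : Set (ι → ℝ)} (hconv : Convex ℝ C) (hclosed : IsClosed C)
    (h0 : 0 ∉ C) : ∃ w : ι → ℝ, ∀ μ ∈ C, 0 < w ⬝ᵥ μ := by
  classical
  obtain ⟨f, u, hfu, hf⟩ := geometric_hahn_banach_point_closed hconv hclosed h0
  let e := dotProductEquiv ℝ ι
  have hf_eq : ∀ x, f x = e.symm f ⬝ᵥ x := fun x =>
    (LinearMap.congr_fun (e.apply_symm_apply (f : (ι → ℝ) →ₗ[ℝ] ℝ)) x).symm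
  refine ⟨e.symm f, fun μ hμ => ?_⟩
  rw [← hf_eq, ← map_zero f]
  exact hfu.trans (hf μ hμ)

lemma exists_forall_dotProduct_pos_of_zero_notMem_convexHull {s : Set (ι → ℝ)} (hs : s.Finite)
    (h0 : 0 ∉ convexHull ℝ s) : ∃ w : ι → ℝ, ∀ μ ∈ s, 0 < w ⬝ᵥ μ := by
  obtain ⟨w, hw⟩ := exists_forall_dotProduct_pos (convex_convexHull ℝ s)
    (hs.isCompact_convexHull ℝ).isClosed h0
  exact ⟨w, fun μ hμ => hw μ (subset_convexHull ℝ s hμ)⟩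

lemma Convex.dualSphere_nonempty_of_finite {Ω : Set (ι → ℝ)} (hne : Ω.Nonempty)
    (hconv : Convex ℝ Ω) (h0 : 0 ∉ Ω) {s : Set (ι → ℝ)} (hs : s.Finite) (hsΩ : s ⊆ Ω) :
    (dualSphere s).Nonempty := by
  obtain ⟨μ₀, hμ₀⟩ := hne
  obtain ⟨w, hw⟩ := exists_forall_dotProduct_pos_of_zero_notMem_convexHull (hs.insert μ₀)
    fun h => h0 (convexHull_min (Set.insert_subset hμ₀ hsΩ) hconv h)
  have hw0 : w ≠ 0 := by
    rintro rfl
    simpa using hw μ₀ (Set.mem_insert μ₀ s)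
  exact ⟨_, inv_l1Norm_smul_mem_dualSphere hw0 fun μ hμ =>
    (hw μ (Set.mem_insert_of_mem μ₀ hμ)).le⟩

lemma dualSphere_nonempty_of_forall_finite {s : Set (ι → ℝ)}
    (h : ∀ t ⊆ s, t.Finite → (dualSphere t).Nonempty) : (dualSphere s).Nonempty := by
  rw [dualSphere_eq_inter]
  refine (isCompact_dualSphere ∅).inter_iInter_nonempty _
    (fun μ => isClosed_setOf_dotProduct_nonneg _) fun u => ?_
  obtain ⟨w, hw⟩ := h (Subtype.val '' (u : Set s)) (by simp) ((u.finite_toSet).image _)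
  refine ⟨w, ⟨hw.1, by simp⟩, ?_⟩
  simp only [Set.mem_iInter]
  exact fun μ hμ => hw.2 μ ⟨μ, hμ, rfl⟩

end

theorem stmt18 (L : ℕ) (Ω : Set (Fin L → ℝ)) (hne : Ω.Nonempty) (hconv : Convex ℝ Ω)
    (h0 : (0 : Fin L → ℝ) ∉ Ω) :
    (∀ I : Finset (Fin L → ℝ), ↑I ⊆ Ω →
      IsCompact {w : Fin L → ℝ | (∑ ℓ, |w ℓ|) = 1 ∧ ∀ μ ∈ I, 0 ≤ ∑ ℓ, w ℓ * μ ℓ} ∧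
      {w : Fin L → ℝ | (∑ ℓ, |w ℓ|) = 1 ∧ ∀ μ ∈ I, 0 ≤ ∑ ℓ, w ℓ * μ ℓ}.Nonempty) ∧
    (⋂ μ ∈ Ω, {w : Fin L → ℝ | (∑ ℓ, |w ℓ|) = 1 ∧ 0 ≤ ∑ ℓ, w ℓ * μ ℓ}).Nonempty := by
  have hfinite : ∀ s ⊆ Ω, s.Finite → (dualSphere s).Nonempty :=
    fun s hsΩ hs => hconv.dualSphere_nonempty_of_finite hne h0 hs hsΩ
  refine ⟨fun I hI =>
    ⟨isCompact_dualSphere (I : Set (Fin L → ℝ)), hfinite I hI I.finite_toSet⟩, ?_⟩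
  obtain ⟨w, hw⟩ := dualSphere_nonempty_of_forall_finite hfinite
  exact ⟨w, Set.mem_iInter₂.2 fun μ hμ => ⟨hw.1, hw.2 μ hμ⟩⟩
end
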